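/- arXiv:math/0206139 — 4 statements merged into one kernel-verified Lean document; each statement's English description precedes it below -/
import Mathlib

section
/- Let K be a field of characteristic zero, r ≥ 1 an integer, and A an r×r matrix with entries in K((t)). Then the set of solutions f ∈ K((t))^r of the linear differential system f' + A·f = 0 (componentwise derivative) is a K-vector subspace of dimension at most r. (These solutions are the horizontal sections E^∇ of the rank-r formal connection ∇ = d + A, whose finite-dimensionality over K is used in the Fredholm theory of connections over K((t)).) -/
/-!
Horizontal sections that are linearly independent over the constants `K` remain linearly
independent over `K((t))`. Indeed, take a `K((t))`-linear relation among them of minimal length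
and scale it so that one coefficient is `1`. Differentiating it (the Leibniz rule for a
connection, together with horizontality) gives a relation whose coefficients are the derivatives
of the old ones; it is shorter, hence trivial. So all coefficients are constants, i.e. lie in `K`
in characteristic zero, contradicting independence over `K`. Thus `dim_K E^∇` is at most
`dim_{K((t))} K((t))^r = r`.

The Leibniz rule for `d/dt` on `K((t))` is read off from the Euler operator `t d/dt`, which
multiplies the coefficient of `tⁿ` by `n`: on a product `∑_{i+j=n} aᵢ bⱼ` this is `n = i + j`.
-/

/-- The formal derivative of a Laurent series `f = Σₙ aₙ tⁿ ∈ K((t))`,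
namely `f' = Σₙ n aₙ tⁿ⁻¹`. -/
noncomputable def lsDeriv {K : Type*} [Field K] (f : LaurentSeries K) : LaurentSeries K where
  coeff n := (n + 1) • f.coeff (n + 1)
  isPWO_support' := by
    apply Set.IsPWO.mono (f.isPWO_support'.image_of_monotone (f := fun n : ℤ => n - 1)
      (fun x y hxy => by simpa using hxy))
    intro n hn
    have : f.coeff (n + 1) ≠ 0 := by
      intro h
      simp [Function.mem_support, h] at hn
    exact ⟨n + 1, this, by ring⟩

open Matrix

section Connection

variable {K L M : Type*} [CommRing K] [CommRing L] [Algebra K L] [AddCommGroup M]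
  [Module L M] [Module K M]

def IsConnection (D : Derivation K L L) (nabla : M →ₗ[K] M) : Prop :=
  ∀ (a : L) (m : M), nabla (a • m) = D a • m + a • nabla m

theorem IsConnection.map_sum_smul_of_horizontal {D : Derivation K L L} {nabla : M →ₗ[K] M}
    (h : IsConnection D nabla) {ι : Type*} {s : Finset ι} {v : ι → M}
    (hv : ∀ i ∈ s, nabla (v i) = 0) (g : ι → L) :
    nabla (∑ i ∈ s, g i • v i) = ∑ i ∈ s, D (g i) • v i := by
  rw [map_sum]
  exact Finset.sum_congr rfl fun i hi => by rw [h, hv i hi, smul_zero, add_zero]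

variable {n : Type*} [Fintype n]

def Derivation.matrixConnection (D : Derivation K L L) (A : Matrix n n L) :
    (n → L) →ₗ[K] (n → L) :=
  D.toLinearMap.compLeft n + A.mulVecLin.restrictScalars K

@[simp]
theorem Derivation.matrixConnection_apply (D : Derivation K L L) (A : Matrix n n L) (f : n → L)
    (i : n) : D.matrixConnection A f i = D (f i) + (A *ᵥ f) i :=
  rfl

theorem Derivation.isConnection_matrixConnection (D : Derivation K L L) (A : Matrix n n L) :
    IsConnection D (D.matrixConnection A) := fun a f => by
  ext i
  simp only [Derivation.matrixConnection_apply, Pi.smul_apply, smul_eq_mul, Derivation.leibniz,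
    Matrix.mulVec_smul, Pi.add_apply]
  ring

end Connection

section LinearIndependence

variable {K L M : Type*} [CommRing K] [Field L] [Algebra K L] [AddCommGroup M]
  [Module L M] [Module K M] [IsScalarTower K L M] {D : Derivation K L L} {nabla : M →ₗ[K] M}

theorem IsConnection.linearIndependent_of_horizontal (h : IsConnection D nabla)
    (hconst : ∀ a, D a = 0 → a ∈ (algebraMap K L).range) {ι : Type*} {v : ι → M}
    (hv : ∀ i, nabla (v i) = 0) (hK : LinearIndependent K v) : LinearIndependent L v := by
  classical
  rw [linearIndependent_iff'] at hK ⊢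
  intro s
  induction s using Finset.strongInduction with
  | H s ih =>
  intro g hg i₀ hi₀
  by_contra hgi₀
  set e : _ → L := fun i => (g i₀)⁻¹ * g i
  have he₀ : e i₀ = 1 := inv_mul_cancel₀ hgi₀
  have he : ∑ i ∈ s, e i • v i = 0 := by
    simp only [e, mul_smul, ← Finset.smul_sum, hg, smul_zero]
  have hDe₀ : D (e i₀) = 0 := by rw [he₀, D.map_one_eq_zero]
  have hDe : ∀ i ∈ s, D (e i) = 0 := by
    have hrel : ∑ i ∈ s.erase i₀, D (e i) • v i = 0 := by
      rw [Finset.sum_erase _ (by rw [hDe₀, zero_smul]),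
        ← h.map_sum_smul_of_horizontal (fun i _ => hv i), he, map_zero]
    intro i hi
    rcases eq_or_ne i i₀ with rfl | hne
    · exact hDe₀
    · exact ih _ (Finset.erase_ssubset hi₀) _ hrel i (Finset.mem_erase.2 ⟨hne, hi⟩)
  choose! c hc using fun i hi => hconst _ (hDe i hi)
  have hc₀ : c i₀ = 0 := by
    refine hK s c ?_ i₀ hi₀
    rw [← he]
    exact Finset.sum_congr rfl fun i hi => by rw [← algebraMap_smul L (c i), hc i hi]
  exact zero_ne_one (by rw [← he₀, ← hc i₀ hi₀, hc₀, map_zero] : (0 : L) = 1)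

theorem IsConnection.rank_ker_le_finrank [Module.Finite L M] (h : IsConnection D nabla)
    (hconst : ∀ a, D a = 0 → a ∈ (algebraMap K L).range) :
    Module.rank K (LinearMap.ker nabla) ≤ Module.finrank L M :=
  rank_le fun s hs => by
    simpa using (h.linearIndependent_of_horizontal hconst (fun i => LinearMap.mem_ker.1 i.1.2)
      (hs.map' _ (LinearMap.ker nabla).ker_subtype)).fintype_card_le_finrank

end LinearIndependence

namespace LaurentSeries

variable {R : Type*} [CommRing R]

noncomputable def eulerOp (f : LaurentSeries R) : LaurentSeries R where
  coeff n := n • f.coeff n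
  isPWO_support' := f.isPWO_support.mono fun n hn h => hn (by simp only [h, smul_zero])

@[simp]
theorem coeff_eulerOp (f : LaurentSeries R) (n : ℤ) : (eulerOp f).coeff n = n • f.coeff n :=
  rfl

theorem support_eulerOp_subset (f : LaurentSeries R) : (eulerOp f).support ⊆ f.support :=
  fun n hn h => hn (by rw [coeff_eulerOp, h, smul_zero])

theorem eulerOp_mul (a b : LaurentSeries R) :
    eulerOp (a * b) = eulerOp a * b + a * eulerOp b := by
  ext n
  rw [HahnSeries.coeff_add, HahnSeries.coeff_mul_left' a.isPWO_support (support_eulerOp_subset a),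
    HahnSeries.coeff_mul_right' b.isPWO_support (support_eulerOp_subset b), coeff_eulerOp,
    HahnSeries.coeff_mul, Finset.smul_sum, ← Finset.sum_add_distrib]
  refine Finset.sum_congr rfl fun p hp => ?_
  rw [Finset.mem_antidiagonal] at hp
  simp only [coeff_eulerOp, smul_mul_assoc, mul_smul_comm, ← add_smul, hp.2.2]

end LaurentSeries

section LaurentSeriesDerivation

variable {K : Type*} [Field K]

theorem lsDeriv_eq_single_mul_eulerOp (f : LaurentSeries K) :
    lsDeriv f = HahnSeries.single (-1) 1 * LaurentSeries.eulerOp f := by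
  ext n
  rw [HahnSeries.coeff_single_mul, one_mul, LaurentSeries.coeff_eulerOp, sub_neg_eq_add]
  rfl

/- The instance `Algebra K K⸨X⸩` found by default is `HahnSeries.powerSeriesAlgebra`, whose scalar
action `c • f = C c * f` is not definitionally the coefficientwise action of
`Submodule K (Fin r → LaurentSeries K)`; `HahnSeries.instAlgebra` is compatible with it. -/
noncomputable def lsDerivation (K : Type*) [Field K] :
    @Derivation K (LaurentSeries K) (LaurentSeries K) _ _ _ HahnSeries.instAlgebra _ _ :=
  letI := HahnSeries.instAlgebra (Γ := ℤ) (R := K) (A := K)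
  Derivation.mk'
    { toFun := lsDeriv
      map_add' f g := by ext n; simp [lsDeriv, smul_add]
      map_smul' c f := by ext n; exact smul_comm (n + 1 : ℤ) c (f.coeff (n + 1)) }
    fun a b => by
      simp only [LinearMap.coe_mk, AddHom.coe_mk, lsDeriv_eq_single_mul_eulerOp,
        LaurentSeries.eulerOp_mul, smul_eq_mul]
      ring

@[simp]
theorem lsDerivation_apply (f : LaurentSeries K) : lsDerivation K f = lsDeriv f :=
  rfl

theorem eq_C_of_lsDeriv_eq_zero [CharZero K] {f : LaurentSeries K} (h : lsDeriv f = 0) :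
    f = HahnSeries.C (f.coeff 0) := by
  ext n
  rw [HahnSeries.C_apply]
  rcases eq_or_ne n 0 with rfl | hn
  · simp
  · have hcoeff := congrArg (fun g : LaurentSeries K => g.coeff (n - 1)) h
    simp only [lsDeriv, HahnSeries.coeff_zero, sub_add_cancel, smul_eq_zero] at hcoeff
    rw [HahnSeries.coeff_single_of_ne hn, hcoeff.resolve_left hn]

end LaurentSeriesDerivation

theorem horizontal_sections_dim_le_rank_general (K : Type*) [Field K] [CharZero K]
    (r : ℕ) (A : Matrix (Fin r) (Fin r) (LaurentSeries K)) :
    ∃ W : Submodule K (Fin r → LaurentSeries K),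
      (W : Set (Fin r → LaurentSeries K)) =
        {f | ∀ i, lsDeriv (f i) + ∑ j, A i j * f j = 0} ∧
      Module.rank K W ≤ r := by
  let _ : Algebra K (LaurentSeries K) := HahnSeries.instAlgebra
  refine ⟨LinearMap.ker ((lsDerivation K).matrixConnection A), ?_, ?_⟩
  · ext f
    simp [funext_iff, Matrix.mulVec, dotProduct]
  · calc _ ≤ (Module.finrank (LaurentSeries K) (Fin r → LaurentSeries K) : Cardinal) :=
          ((lsDerivation K).isConnection_matrixConnection A).rank_ker_le_finrank
            fun a ha => ⟨a.coeff 0, (eq_C_of_lsDeriv_eq_zero ha).symm⟩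
      _ = r := by simp

/-- Let `K` be a field of characteristic zero, `r ≥ 1`, and `A` an `r × r` matrix over
`K((t))`.  The horizontal sections of the formal connection `∇ = d + A`, i.e. the
solutions `f ∈ K((t))^r` of the linear differential system `f' + A·f = 0`, form a
`K`-vector subspace of `K((t))^r` of dimension at most `r`. -/
theorem horizontal_sections_dim_le_rank (K : Type*) [Field K] [CharZero K]
    (r : ℕ) (hr : 1 ≤ r) (A : Matrix (Fin r) (Fin r) (LaurentSeries K)) :
    ∃ W : Submodule K (Fin r → LaurentSeries K),
      (W : Set (Fin r → LaurentSeries K)) =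
        {f | ∀ i, lsDeriv (f i) + ∑ j, A i j * f j = 0} ∧
      Module.rank K W ≤ r :=
  horizontal_sections_dim_le_rank_general K r A
end

section
/- Let K be a field, V a K-vector space, and L, L' two K-subspaces of V. Suppose N and N' are K-subspaces of L ∩ L' such that all four quotients L/N, L'/N, L/N', L'/N' are finite-dimensional over K. Then dim_K(L/N) − dim_K(L'/N) = dim_K(L/N') − dim_K(L'/N'). (This is the independence of the choice of the smaller compact lattice N in the definition of the relative determinant line det(L:L') = det(L/N)·det(L'/N)^{-1} of two commensurable lattices, at the level of degrees.) -/
open Module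

/-- If `p ≤ q` and `W⧸p` is finite dimensional, then
`dim W⧸p = dim W⧸q + dim (image of q in W⧸p)`. -/
lemma aux_quot_add {K : Type*} [Field K] {W : Type*} [AddCommGroup W] [Module K W]
    (p q : Submodule K W) (h : p ≤ q) [FiniteDimensional K (W ⧸ p)] :
    finrank K (W ⧸ p) = finrank K (W ⧸ q) + finrank K (q.map p.mkQ) := by
  have e := Submodule.quotientQuotientEquivQuotient p q h
  have h1 := Submodule.finrank_quotient_add_finrank (q.map p.mkQ)
  rw [e.finrank_eq] at h1
  omega

/-- The image of `N` in `L ⧸ M` has dimension `dim (N ⧸ M)`, independent of `L`. -/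
lemma aux_image_finrank {K : Type*} [Field K] {V : Type*} [AddCommGroup V] [Module K V]
    (L N M : Submodule K V) (hNL : N ≤ L) (hMN : M ≤ N) :
    finrank K ((N.comap L.subtype).map (M.comap L.subtype).mkQ)
      = finrank K (N ⧸ M.comap N.subtype) := by
  let f : N →ₗ[K] L ⧸ (M.comap L.subtype) :=
    (M.comap L.subtype).mkQ ∘ₗ Submodule.inclusion hNL
  have hker : LinearMap.ker f = M.comap N.subtype := by
    ext x
    simp [f, Submodule.Quotient.mk_eq_zero, Submodule.inclusion]
  have hrange : LinearMap.range f = (N.comap L.subtype).map (M.comap L.subtype).mkQ := by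
    ext y
    constructor
    · rintro ⟨x, rfl⟩
      exact ⟨Submodule.inclusion hNL x, x.2, rfl⟩
    · rintro ⟨z, hz, rfl⟩
      exact ⟨⟨(z : V), hz⟩, rfl⟩
  have e := f.quotKerEquivRange
  rw [hker, hrange] at e
  exact e.symm.finrank_eq

/-- Step: replacing `N` by a smaller lattice `M` does not change the degree. -/
lemma aux_step {K : Type*} [Field K] {V : Type*} [AddCommGroup V] [Module K V]
    (L L' N M : Submodule K V) (hN : N ≤ L ⊓ L') (hMN : M ≤ N)
    [FiniteDimensional K (L ⧸ (M.comap L.subtype))]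
    [FiniteDimensional K (L' ⧸ (M.comap L'.subtype))] :
    (finrank K (L ⧸ (N.comap L.subtype)) : ℤ)
        - finrank K (L' ⧸ (N.comap L'.subtype))
      = (finrank K (L ⧸ (M.comap L.subtype)) : ℤ)
        - finrank K (L' ⧸ (M.comap L'.subtype)) := by
  have h1 := aux_quot_add (M.comap L.subtype) (N.comap L.subtype)
    (Submodule.comap_mono hMN)
  have h2 := aux_quot_add (M.comap L'.subtype) (N.comap L'.subtype)
    (Submodule.comap_mono hMN)
  have h3 := aux_image_finrank L N M (hN.trans inf_le_left) hMN
  have h4 := aux_image_finrank L' N M (hN.trans inf_le_right) hMN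
  rw [h1, h2, h3, h4]
  push_cast
  ring

/-- Let `K` be a field, `V` a `K`-vector space and `L, L'` two subspaces of `V`.
If `N, N' ⊆ L ∩ L'` are subspaces such that all four quotients `L/N`, `L'/N`,
`L/N'`, `L'/N'` are finite-dimensional, then
`dim L/N − dim L'/N = dim L/N' − dim L'/N'`.
This is the independence, at the level of degrees, of the relative determinant
line `det(L:L') = det(L/N)·det(L'/N)⁻¹` of two commensurable lattices from the
choice of the smaller lattice `N`. -/
theorem relative_determinant_degree_well_defined (K : Type*) [Field K]
    (V : Type*) [AddCommGroup V] [Module K V]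
    (L L' N N' : Submodule K V) (hN : N ≤ L ⊓ L') (hN' : N' ≤ L ⊓ L')
    [FiniteDimensional K (L ⧸ (N.comap L.subtype))]
    [FiniteDimensional K (L' ⧸ (N.comap L'.subtype))]
    [FiniteDimensional K (L ⧸ (N'.comap L.subtype))]
    [FiniteDimensional K (L' ⧸ (N'.comap L'.subtype))] :
    (Module.finrank K (L ⧸ (N.comap L.subtype)) : ℤ)
        - Module.finrank K (L' ⧸ (N.comap L'.subtype))
      = (Module.finrank K (L ⧸ (N'.comap L.subtype)) : ℤ)
        - Module.finrank K (L' ⧸ (N'.comap L'.subtype)) := by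
  set M := N ⊓ N' with hM
  -- `L ⧸ M` embeds into `(L ⧸ N) × (L ⧸ N')`, hence is finite dimensional.
  have key : ∀ (W : Submodule K V),
      FiniteDimensional K (W ⧸ (N.comap W.subtype)) →
      FiniteDimensional K (W ⧸ (N'.comap W.subtype)) →
      FiniteDimensional K (W ⧸ (M.comap W.subtype)) := by
    intro W _ _
    have hcomap : M.comap W.subtype = N.comap W.subtype ⊓ N'.comap W.subtype := by
      simp [hM, Submodule.comap_inf]
    have hkerprod : LinearMap.ker
        (LinearMap.prod (N.comap W.subtype).mkQ (N'.comap W.subtype).mkQ)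
          = M.comap W.subtype := by
      rw [LinearMap.ker_prod, Submodule.ker_mkQ, Submodule.ker_mkQ, hcomap]
    let g := Submodule.liftQ (M.comap W.subtype)
      (LinearMap.prod (N.comap W.subtype).mkQ (N'.comap W.subtype).mkQ) hkerprod.ge
    have hg : Function.Injective g := by
      rw [← LinearMap.ker_eq_bot, Submodule.ker_liftQ_eq_bot']
      exact hkerprod.symm
    exact FiniteDimensional.of_injective g hg
  have hL : FiniteDimensional K (L ⧸ (M.comap L.subtype)) := key L ‹_› ‹_›
  have hL' : FiniteDimensional K (L' ⧸ (M.comap L'.subtype)) := key L' ‹_› ‹_›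
  rw [aux_step L L' N M hN inf_le_left, aux_step L L' N' M hN' inf_le_right]
end

section
/- Let K be a field, V a K-vector space, A : V → V a K-linear map, and L a K-subspace of V. Assume that the following six K-vector spaces are finite-dimensional: L/(L ∩ A⁻¹(L)), A⁻¹(L)/(L ∩ A⁻¹(L)), L/(L ∩ A(L)), A(L)/(L ∩ A(L)), V/(L + A(V)), and L ∩ ker(A). Then ker(A) and coker(A) = V/A(V) are finite-dimensional over K, and dim ker(A) − dim coker(A) = [dim A⁻¹(L)/(L ∩ A⁻¹(L)) − dim L/(L ∩ A⁻¹(L))] − dim V/(L + A(V)) + [dim A(L)/(L ∩ A(L)) − dim L/(L ∩ A(L))] + dim(L ∩ ker(A)). (This is the degree part of the relation λ(A) = λ_d(A)·λ_c(A)^{-1} between the determinant super-line λ(A) = det(H⁰(A))⊗det(H¹(A))^{-1} of a Fredholm endomorphism and its discrete and compact asymptotic super-lines λ_d(A) = det(L:A⁻¹(L))·det(V/(L+A(V))) and λ_c(A) = det(A(L):L)·det(L ∩ ker(A)), which underlies the product formula for the determinant of cohomology.) -/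
open LinearMap Submodule Module Function

section Aux
variable {K : Type*} [Field K] {X Y Z : Type*}
  [AddCommGroup X] [Module K X] [AddCommGroup Y] [Module K Y] [AddCommGroup Z] [Module K Z]

lemma myFinDim_of_sub_quot (S : Submodule K Z) (h1 : FiniteDimensional K S)
    (h2 : FiniteDimensional K (Z ⧸ S)) : FiniteDimensional K Z := by
  have h2' : ((⊤ : Submodule K Z).map S.mkQ).FG := by
    rw [Submodule.map_top, Submodule.range_mkQ]
    exact Module.finite_def.mp h2
  have h1' : ((⊤ : Submodule K Z) ⊓ LinearMap.ker S.mkQ).FG := by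
    rw [top_inf_eq, Submodule.ker_mkQ]
    exact (Submodule.fg_iff_finiteDimensional S).mpr h1
  exact Module.finite_def.mpr (Submodule.fg_of_fg_map_of_fg_inf_ker S.mkQ h2' h1')

lemma mySurjRank (f : X →ₗ[K] Y) (hf : Function.Surjective f) [FiniteDimensional K X] :
    FiniteDimensional K Y ∧
      finrank K X = finrank K (LinearMap.ker f) + finrank K Y := by
  have hY : FiniteDimensional K Y := Module.Finite.of_surjective f hf
  have h := f.finrank_range_add_finrank_ker
  rw [LinearMap.range_eq_top.2 hf, finrank_top] at h
  exact ⟨hY, by omega⟩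

end Aux

/-- Let `K` be a field, `V` a `K`-vector space, `A : V → V` a `K`-linear map and
`L ⊆ V` a subspace.  Assume the six spaces `L/(L ∩ A⁻¹L)`, `A⁻¹L/(L ∩ A⁻¹L)`,
`L/(L ∩ AL)`, `AL/(L ∩ AL)`, `V/(L + A(V))` and `L ∩ ker A` are finite-dimensional.
Then `ker A` and `coker A = V/A(V)` are finite-dimensional and
`dim ker A − dim coker A
  = [dim A⁻¹L/(L ∩ A⁻¹L) − dim L/(L ∩ A⁻¹L)] − dim V/(L + A(V))
    + [dim AL/(L ∩ AL) − dim L/(L ∩ AL)] + dim (L ∩ ker A)`.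
This is the degree part of the relation `λ(A) = λ_d(A)·λ_c(A)⁻¹` between the
determinant super-line of a Fredholm endomorphism and its discrete and compact
asymptotic super-lines. -/
theorem fredholm_index_discrete_compact_degree (K : Type*) [Field K]
    (V : Type*) [AddCommGroup V] [Module K V]
    (A : V →ₗ[K] V) (L : Submodule K V)
    [FiniteDimensional K (L ⧸ ((L ⊓ L.comap A).comap L.subtype))]
    [FiniteDimensional K ((L.comap A) ⧸ ((L ⊓ L.comap A).comap (L.comap A).subtype))]
    [FiniteDimensional K (L ⧸ ((L ⊓ L.map A).comap L.subtype))]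
    [FiniteDimensional K ((L.map A) ⧸ ((L ⊓ L.map A).comap (L.map A).subtype))]
    [FiniteDimensional K (V ⧸ (L ⊔ LinearMap.range A))]
    [FiniteDimensional K (L ⊓ LinearMap.ker A : Submodule K V)] :
    FiniteDimensional K (LinearMap.ker A) ∧
    FiniteDimensional K (V ⧸ LinearMap.range A) ∧
    (Module.finrank K (LinearMap.ker A) : ℤ)
        - Module.finrank K (V ⧸ LinearMap.range A)
      = ((Module.finrank K ((L.comap A) ⧸ ((L ⊓ L.comap A).comap (L.comap A).subtype)) : ℤ)
            - Module.finrank K (L ⧸ ((L ⊓ L.comap A).comap L.subtype)))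
        - Module.finrank K (V ⧸ (L ⊔ LinearMap.range A))
        + ((Module.finrank K ((L.map A) ⧸ ((L ⊓ L.map A).comap (L.map A).subtype)) : ℤ)
            - Module.finrank K (L ⧸ ((L ⊓ L.map A).comap L.subtype)))
        + Module.finrank K (L ⊓ LinearMap.ker A : Submodule K V) := by
  classical
  -- === E1 : the map ψ : A⁻¹L/(L⊓A⁻¹L) → Q/(L⊓AL)  where Q = L ⊓ range A ===
  have hQ1 : ∀ x ∈ L.comap A, A x ∈ L ⊓ LinearMap.range A := fun x hx => ⟨hx, x, rfl⟩
  let ψ1 : (L.comap A) →ₗ[K]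
      ((L ⊓ LinearMap.range A : Submodule K V) ⧸
        ((L ⊓ L.map A).comap (L ⊓ LinearMap.range A : Submodule K V).subtype)) :=
    (Submodule.mkQ _) ∘ₗ (A.restrict hQ1)
  have hker1 : (L ⊓ L.comap A).comap (L.comap A).subtype ≤ LinearMap.ker ψ1 := by
    rintro ⟨x, hxP⟩ hx
    obtain ⟨hxL, hxP'⟩ := hx
    have hAx : A x ∈ L ⊓ L.map A := ⟨hxP, ⟨x, hxL, rfl⟩⟩
    simp only [ψ1, LinearMap.mem_ker, LinearMap.comp_apply, Submodule.mkQ_apply,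
      Submodule.Quotient.mk_eq_zero, Submodule.mem_comap, LinearMap.restrict_apply,
      Submodule.coe_subtype]
    exact hAx
  let ψ := Submodule.liftQ _ ψ1 hker1
  have hψs : Surjective ψ := by
    intro y
    obtain ⟨⟨q, hqL, hqR⟩, rfl⟩ := Submodule.mkQ_surjective _ y
    obtain ⟨v, rfl⟩ := hqR
    have hvP : v ∈ L.comap A := hqL
    refine ⟨Submodule.Quotient.mk ⟨v, hvP⟩, ?_⟩
    rfl
  obtain ⟨hfinQN, hE1⟩ := mySurjRank ψ hψs
  -- === identification of ker ψ with ker A / (L ⊓ ker A) ===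
  have hkerP : LinearMap.ker A ≤ L.comap A := by
    intro x hx
    have : A x = 0 := hx
    simp [Submodule.mem_comap, this]
  let χ1 : (LinearMap.ker A) →ₗ[K]
      ((L.comap A) ⧸ ((L ⊓ L.comap A).comap (L.comap A).subtype)) :=
    (Submodule.mkQ _) ∘ₗ Submodule.inclusion hkerP
  have hkerχ : LinearMap.ker χ1 = (L ⊓ LinearMap.ker A).comap (LinearMap.ker A).subtype := by
    ext ⟨x, hx⟩
    have hAx : A x = 0 := hx
    simp only [χ1, LinearMap.mem_ker, LinearMap.comp_apply, Submodule.mkQ_apply,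
      Submodule.Quotient.mk_eq_zero, Submodule.mem_comap, Submodule.mem_inf,
      Submodule.coe_subtype, Submodule.coe_inclusion]
    constructor
    · rintro ⟨h1, -⟩
      exact ⟨h1, hx⟩
    · rintro ⟨h1, -⟩
      exact ⟨h1, by simp [Submodule.mem_comap, hAx]⟩
  have hrangeχ : LinearMap.range χ1 = LinearMap.ker ψ := by
    ext y
    constructor
    · rintro ⟨⟨x, hx⟩, rfl⟩
      have hAx : A x = 0 := hx
      simp only [χ1, LinearMap.mem_ker, LinearMap.comp_apply, Submodule.mkQ_apply]
      have : ψ (Submodule.Quotient.mk (Submodule.inclusion hkerP ⟨x, hx⟩)) =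
          ψ1 (Submodule.inclusion hkerP ⟨x, hx⟩) := rfl
      rw [this]
      simp only [ψ1, LinearMap.comp_apply, Submodule.mkQ_apply,
        Submodule.Quotient.mk_eq_zero, Submodule.mem_comap, LinearMap.restrict_apply,
        Submodule.coe_subtype, Submodule.coe_inclusion, hAx]
      exact Submodule.zero_mem _
    · intro hy
      obtain ⟨⟨x, hxP⟩, rfl⟩ := Submodule.mkQ_surjective _ y
      have hy' : ψ1 ⟨x, hxP⟩ = 0 := hy
      have hAx : A x ∈ L ⊓ L.map A := by
        simpa only [ψ1, LinearMap.comp_apply, Submodule.mkQ_apply,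
          Submodule.Quotient.mk_eq_zero, Submodule.mem_comap, LinearMap.restrict_apply,
          Submodule.coe_subtype] using hy'
      obtain ⟨hAxL, m, hmL, hm⟩ := hAx
      have hxm : A (x - m) = 0 := by
        simp [map_sub, hm]
      have hmP : m ∈ L.comap A := by
        simp only [Submodule.mem_comap]
        rw [hm]; exact hAxL
      refine ⟨⟨x - m, hxm⟩, ?_⟩
      simp only [χ1, LinearMap.comp_apply, Submodule.mkQ_apply]
      rw [Submodule.Quotient.eq]
      refine Submodule.mem_comap.mpr ?_
      have hco : (((Submodule.inclusion hkerP ⟨x - m, hxm⟩ : L.comap A) - ⟨x, hxP⟩ : L.comap A) : V)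
          = -m := by
        simp [Submodule.coe_inclusion]
      rw [Submodule.coe_subtype, hco]
      exact Submodule.neg_mem _ ⟨hmL, hmP⟩
  have e2 : ((LinearMap.ker A) ⧸ ((L ⊓ LinearMap.ker A).comap (LinearMap.ker A).subtype)) ≃ₗ[K]
      LinearMap.ker ψ :=
    ((Submodule.quotEquivOfEq _ _ hkerχ.symm).trans χ1.quotKerEquivRange).trans
      (LinearEquiv.ofEq _ _ hrangeχ)
  haveI hfinKQ : FiniteDimensional K
      ((LinearMap.ker A) ⧸ ((L ⊓ LinearMap.ker A).comap (LinearMap.ker A).subtype)) :=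
    Module.Finite.equiv e2.symm
  haveI hfinS' : FiniteDimensional K
      ((L ⊓ LinearMap.ker A).comap (LinearMap.ker A).subtype : Submodule K (LinearMap.ker A)) :=
    Module.Finite.equiv (Submodule.comapSubtypeEquivOfLe (inf_le_right :
      L ⊓ LinearMap.ker A ≤ LinearMap.ker A)).symm
  haveI hfinkerA : FiniteDimensional K (LinearMap.ker A) := myFinDim_of_sub_quot _ hfinS' hfinKQ
  have hE2 := Submodule.finrank_quotient_add_finrank
    ((L ⊓ LinearMap.ker A).comap (LinearMap.ker A).subtype)
  have hff : finrank K ((L ⊓ LinearMap.ker A).comap (LinearMap.ker A).subtype :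
      Submodule K (LinearMap.ker A)) = finrank K (L ⊓ LinearMap.ker A : Submodule K V) :=
    (Submodule.comapSubtypeEquivOfLe inf_le_right).finrank_eq
  have hk2 : finrank K (LinearMap.ker ψ) = finrank K
      ((LinearMap.ker A) ⧸ ((L ⊓ LinearMap.ker A).comap (LinearMap.ker A).subtype)) :=
    e2.symm.finrank_eq
  -- === E5 : b = c ===
  have hLAL : ∀ x ∈ L, A x ∈ L.map A := fun x hx => ⟨x, hx, rfl⟩
  let φ1 : L →ₗ[K] ((L.map A) ⧸ ((L ⊓ L.map A).comap (L.map A).subtype)) :=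
    (Submodule.mkQ _) ∘ₗ A.restrict hLAL
  have hφs : Surjective φ1 := by
    intro y
    obtain ⟨⟨q, hq⟩, rfl⟩ := Submodule.mkQ_surjective _ y
    obtain ⟨m, hmL, rfl⟩ := hq
    exact ⟨⟨m, hmL⟩, rfl⟩
  have hkerφ : LinearMap.ker φ1 = (L ⊓ L.comap A).comap L.subtype := by
    ext ⟨x, hx⟩
    simp only [φ1, LinearMap.mem_ker, LinearMap.comp_apply, Submodule.mkQ_apply,
      Submodule.Quotient.mk_eq_zero, Submodule.mem_comap, LinearMap.restrict_apply,
      Submodule.coe_subtype, Submodule.mem_inf]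
    constructor
    · rintro ⟨h1, -⟩
      exact ⟨hx, h1⟩
    · rintro ⟨-, h2⟩
      exact ⟨h2, hLAL x hx⟩
  have hbc : finrank K (L ⧸ ((L ⊓ L.comap A).comap L.subtype)) =
      finrank K ((L.map A) ⧸ ((L ⊓ L.map A).comap (L.map A).subtype)) :=
    ((Submodule.quotEquivOfEq _ _ hkerφ.symm).trans
      (φ1.quotKerEquivOfSurjective hφs)).finrank_eq
  -- === E3 ===
  have hNQle : (L ⊓ L.map A).comap L.subtype ≤ (L ⊓ LinearMap.range A).comap L.subtype := by
    rintro x ⟨h1, h2⟩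
    exact ⟨h1, LinearMap.map_le_range h2⟩
  let ψ3 : (L ⧸ ((L ⊓ L.map A).comap L.subtype)) →ₗ[K]
      (L ⧸ ((L ⊓ LinearMap.range A).comap L.subtype)) :=
    Submodule.liftQ _ (Submodule.mkQ _) (by rw [Submodule.ker_mkQ]; exact hNQle)
  have hψ3s : Surjective ψ3 := by
    intro y
    obtain ⟨x, rfl⟩ := Submodule.mkQ_surjective _ y
    exact ⟨Submodule.Quotient.mk x, rfl⟩
  let ρ : (L ⊓ LinearMap.range A : Submodule K V) →ₗ[K]
      (L ⧸ ((L ⊓ L.map A).comap L.subtype)) :=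
    (Submodule.mkQ _) ∘ₗ Submodule.inclusion inf_le_left
  have hkerρ : LinearMap.ker ρ =
      (L ⊓ L.map A).comap (L ⊓ LinearMap.range A : Submodule K V).subtype := by
    ext ⟨x, hx⟩
    simp only [ρ, LinearMap.mem_ker, LinearMap.comp_apply, Submodule.mkQ_apply,
      Submodule.Quotient.mk_eq_zero, Submodule.mem_comap, Submodule.coe_subtype,
      Submodule.coe_inclusion]
  have hrangeρ : LinearMap.range ρ = LinearMap.ker ψ3 := by
    ext y
    constructor
    · rintro ⟨⟨x, hxQ⟩, rfl⟩
      have : ψ3 (ρ ⟨x, hxQ⟩) =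
          Submodule.Quotient.mk (Submodule.inclusion inf_le_left ⟨x, hxQ⟩) := rfl
      simp only [LinearMap.mem_ker, this, Submodule.Quotient.mk_eq_zero,
        Submodule.mem_comap, Submodule.coe_subtype, Submodule.coe_inclusion]
      exact hxQ
    · intro hy
      obtain ⟨x, rfl⟩ := Submodule.mkQ_surjective _ y
      have hx : (x : V) ∈ L ⊓ LinearMap.range A := by
        have h0 : ψ3 (((L ⊓ L.map A).comap L.subtype).mkQ x) =
            ((L ⊓ LinearMap.range A).comap L.subtype).mkQ x := rfl
        have h1 := LinearMap.mem_ker.mp hy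
        rw [h0, Submodule.mkQ_apply, Submodule.Quotient.mk_eq_zero] at h1
        exact h1
      refine ⟨⟨(x : V), hx⟩, ?_⟩
      have : Submodule.inclusion (inf_le_left : L ⊓ LinearMap.range A ≤ L) ⟨(x : V), hx⟩ = x :=
        Subtype.ext rfl
      simp only [ρ, LinearMap.comp_apply, Submodule.mkQ_apply, this]
  have ht : finrank K (LinearMap.ker ψ3) = finrank K
      ((L ⊓ LinearMap.range A : Submodule K V) ⧸
        ((L ⊓ L.map A).comap (L ⊓ LinearMap.range A : Submodule K V).subtype)) :=
    (((Submodule.quotEquivOfEq _ _ hkerρ.symm).trans ρ.quotKerEquivRange).trans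
      (LinearEquiv.ofEq _ _ hrangeρ)).finrank_eq.symm
  obtain ⟨hfinLQL, hE3⟩ := mySurjRank ψ3 hψ3s
  -- === E4 ===
  let σ : L →ₗ[K] (V ⧸ LinearMap.range A) := (LinearMap.range A).mkQ ∘ₗ L.subtype
  have hkerσ : LinearMap.ker σ = (L ⊓ LinearMap.range A).comap L.subtype := by
    ext ⟨x, hx⟩
    simp only [σ, LinearMap.mem_ker, LinearMap.comp_apply, Submodule.mkQ_apply,
      Submodule.Quotient.mk_eq_zero, Submodule.mem_comap, Submodule.coe_subtype,
      Submodule.mem_inf]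
    exact ⟨fun h => ⟨hx, h⟩, fun h => h.2⟩
  have eS : (L ⧸ ((L ⊓ LinearMap.range A).comap L.subtype)) ≃ₗ[K] LinearMap.range σ :=
    (Submodule.quotEquivOfEq _ _ hkerσ.symm).trans σ.quotKerEquivRange
  have hSmap : LinearMap.range σ = (L ⊔ LinearMap.range A).map (LinearMap.range A).mkQ := by
    ext y
    constructor
    · rintro ⟨⟨x, hx⟩, rfl⟩
      exact ⟨x, Submodule.mem_sup_left hx, rfl⟩
    · rintro ⟨v, hv, rfl⟩
      obtain ⟨l, hl, r, hr, rfl⟩ := Submodule.mem_sup.mp hv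
      refine ⟨⟨l, hl⟩, ?_⟩
      simp only [σ, LinearMap.comp_apply, Submodule.mkQ_apply, Submodule.coe_subtype]
      rw [Submodule.Quotient.eq]
      simpa using Submodule.neg_mem _ hr
  have eQQ : ((V ⧸ LinearMap.range A) ⧸ LinearMap.range σ) ≃ₗ[K]
      (V ⧸ (L ⊔ LinearMap.range A)) :=
    (Submodule.quotEquivOfEq _ _ hSmap).trans
      (Submodule.quotientQuotientEquivQuotient _ _ le_sup_right)
  haveI hfinS : FiniteDimensional K (LinearMap.range σ) := Module.Finite.equiv eS
  haveI hfinQQ : FiniteDimensional K ((V ⧸ LinearMap.range A) ⧸ LinearMap.range σ) :=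
    Module.Finite.equiv eQQ.symm
  haveI hcoker : FiniteDimensional K (V ⧸ LinearMap.range A) :=
    myFinDim_of_sub_quot _ hfinS hfinQQ
  have hE4 := Submodule.finrank_quotient_add_finrank (LinearMap.range σ)
  have hu : finrank K (LinearMap.range σ) =
      finrank K (L ⧸ ((L ⊓ LinearMap.range A).comap L.subtype)) := eS.finrank_eq.symm
  have he' : finrank K ((V ⧸ LinearMap.range A) ⧸ LinearMap.range σ) =
      finrank K (V ⧸ (L ⊔ LinearMap.range A)) := eQQ.finrank_eq
  refine ⟨hfinkerA, hcoker, ?_⟩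
  omega
end

section
/- Let k ⊆ K be fields of characteristic zero and m ≥ 2 an integer. Let a, b ∈ K[[t]] be formal power series with invertible constant terms a(0), b(0) ∈ K^×; let s ∈ K[[t]] satisfy s(0) = 0 and s'(0) ∈ K^× (a change of local parameter, so that s is invertible of order 1 in K((t))); and let u ∈ K((t)) be nonzero (a change of local frame). Suppose that a·t^{−m} = (b∘s)·s^{−m}·s' + u'/u holds in K((t)), i.e., the rank-one connection forms a·dt/t^m and b·dt'/t'^m correspond under the substitution t' = s(t) and the frame change by u. Then m·(d log a(0) − d log b(0)) lies in the subgroup 2·DLog of Ω¹_{K/k}. Consequently the 2-torsion connection (m/2)·d log a(0) ∈ Ω¹_{K/k}/DLog attached to a rank-one connection with local equation a·dt/t^m + (lower order terms) at an irregular point does not depend on the choices of local parameter and frame (the well-definedness claim in the formula for the determinant of the Gauss–Manin connection). -/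
/-- Composition (substitution) `b ∘ s` of formal power series: for `s` with zero
constant term, the coefficient of `t^k` in `b ∘ s = Σₙ bₙ sⁿ` is
`Σ_{n ≤ k} bₙ · (coefficient of t^k in sⁿ)`. -/
noncomputable def psComp {K : Type*} [Field K] (b s : PowerSeries K) : PowerSeries K :=
  PowerSeries.mk fun k =>
    ∑ n ∈ Finset.range (k + 1), PowerSeries.coeff (R := K) n b * PowerSeries.coeff (R := K) k (s ^ n)

/-- The additive subgroup `DLog ⊆ Ω¹_{K/k}` generated by the logarithmic
differentials `d log c = c⁻¹ · dc` for `c ∈ Kˣ`. -/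
noncomputable def dlogSubgroup (k K : Type*) [Field k] [Field K] [Algebra k K] :
    AddSubgroup (KaehlerDifferential k K) :=
  AddSubgroup.closure {ω | ∃ c : K, c ≠ 0 ∧ ω = c⁻¹ • KaehlerDifferential.D k K c}

/-!
Write `c = s'(0)`. Multiplying the relation by `s^m · u` clears all denominators, and comparing
coefficients of `t^(ord u)` gives `a(0) · c^m = b(0) · c`: the frame term `u' · s^m` has order at
least `ord u - 1 + m > ord u` because `m ≥ 2`. Hence `b(0) = a(0) · c^(m-1)`, so
`m · (d log a(0) - d log b(0)) = -m(m-1) · d log c`, and `m(m-1)` is even.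
-/

namespace HahnSeries

variable {Γ R : Type*} [AddCommMonoid Γ] [LinearOrder Γ] [IsOrderedCancelAddMonoid Γ]

theorem coeff_mul_of_le_orderTop [NonUnitalNonAssocSemiring R] {x y : R⟦Γ⟧} {g h : Γ}
    (hx : (g : WithTop Γ) ≤ x.orderTop) (hy : (h : WithTop Γ) ≤ y.orderTop) :
    (x * y).coeff (g + h) = x.coeff g * y.coeff h := by
  rw [coeff_mul, ← Finset.sum_singleton (fun ij : Γ × Γ => x.coeff ij.1 * y.coeff ij.2) (g, h)]
  refine Finset.sum_subset (fun ij hij => ?_) (fun ij hgh hij => ?_)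
  · obtain ⟨hi, hj, hsum⟩ := Finset.mem_antidiagonal.mp hij
    have hgi : g ≤ ij.1 := WithTop.coe_le_coe.mp (hx.trans (orderTop_le_of_coeff_ne_zero hi))
    have hhj : h ≤ ij.2 := WithTop.coe_le_coe.mp (hy.trans (orderTop_le_of_coeff_ne_zero hj))
    rw [Finset.mem_singleton, Prod.ext_iff]
    exact ⟨(eq_of_le_of_not_lt hgi fun hlt => (add_lt_add_of_lt_of_le hlt hhj).ne hsum.symm).symm,
      (eq_of_le_of_not_lt hhj fun hlt => (add_lt_add_of_le_of_lt hgi hlt).ne hsum.symm).symm⟩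
  · obtain rfl := Finset.mem_singleton.mp hgh
    simp only [Finset.mem_antidiagonal, mem_support, and_true, not_and_or, not_not] at hij
    rcases hij with h0 | h0 <;> simp [h0]

theorem le_orderTop_mul [NonUnitalNonAssocSemiring R] {x y : R⟦Γ⟧} {g h : Γ}
    (hx : (g : WithTop Γ) ≤ x.orderTop) (hy : (h : WithTop Γ) ≤ y.orderTop) :
    ((g + h : Γ) : WithTop Γ) ≤ (x * y).orderTop :=
  WithTop.coe_add g h ▸ (add_le_add hx hy).trans orderTop_add_le_mul

theorem le_orderTop_pow [Semiring R] {x : R⟦Γ⟧} {g : Γ} (hx : (g : WithTop Γ) ≤ x.orderTop)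
    (n : ℕ) : ((n • g : Γ) : WithTop Γ) ≤ (x ^ n).orderTop :=
  WithTop.coe_nsmul g n ▸ (nsmul_le_nsmul_right hx n).trans orderTop_nsmul_le_orderTop_pow

theorem coeff_pow_of_le_orderTop [Semiring R] {x : R⟦Γ⟧} {g : Γ}
    (hx : (g : WithTop Γ) ≤ x.orderTop) (n : ℕ) : (x ^ n).coeff (n • g) = x.coeff g ^ n := by
  induction n with
  | zero => simp [coeff_one]
  | succ n ih =>
    rw [pow_succ, succ_nsmul, coeff_mul_of_le_orderTop (le_orderTop_pow hx n) hx, ih, pow_succ]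

theorem le_orderTop_ofPowerSeries [Semiring R] {x : PowerSeries R} {n : ℕ}
    (h : ∀ i < n, PowerSeries.coeff i x = 0) :
    ((n : ℤ) : WithTop ℤ) ≤ (ofPowerSeries ℤ R x).orderTop := by
  refine le_orderTop_iff_forall.mpr fun j hj => ?_
  rw [PowerSeries.coeff_coe]
  split_ifs with hneg
  · rfl
  · exact h _ (by have := WithTop.coe_lt_coe.mp hj; omega)

theorem zero_le_orderTop_ofPowerSeries [Semiring R] (x : PowerSeries R) :
    ((0 : ℤ) : WithTop ℤ) ≤ (ofPowerSeries ℤ R x).orderTop := by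
  simpa using le_orderTop_ofPowerSeries (x := x) (n := 0) (by simp)

theorem coeff_zero_ofPowerSeries [Semiring R] (x : PowerSeries R) :
    (ofPowerSeries ℤ R x).coeff 0 = PowerSeries.constantCoeff x := by
  simpa using PowerSeries.coeff_coe x 0

end HahnSeries

section lsDeriv

variable {K : Type*} [Field K]

@[simp]
theorem coeff_lsDeriv (f : LaurentSeries K) (i : ℤ) :
    (lsDeriv f).coeff i = (i + 1) • f.coeff (i + 1) := rfl

theorem le_orderTop_lsDeriv {f : LaurentSeries K} {g : ℤ} (hg : (g : WithTop ℤ) ≤ f.orderTop) :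
    ((g - 1 : ℤ) : WithTop ℤ) ≤ (lsDeriv f).orderTop := by
  refine HahnSeries.le_orderTop_iff_forall.mpr fun j hj => ?_
  rw [coeff_lsDeriv, HahnSeries.coeff_eq_zero_of_lt_orderTop, smul_zero]
  exact lt_of_lt_of_le (WithTop.coe_lt_coe.mpr (by have := WithTop.coe_lt_coe.mp hj; omega)) hg

end lsDeriv

theorem constantCoeff_psComp {K : Type*} [Field K] (b s : PowerSeries K) :
    PowerSeries.constantCoeff (psComp b s) = PowerSeries.constantCoeff b := by
  simp [psComp]

section Connection

open HahnSeries

variable {K : Type*} [Field K]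

theorem constantCoeff_mul_pow_eq_of_connection_eq {m : ℕ} (hm : 2 ≤ m) {a b s : PowerSeries K}
    (hs0 : PowerSeries.constantCoeff s = 0) (hs1 : PowerSeries.coeff 1 s ≠ 0)
    {u : LaurentSeries K} (hu : u ≠ 0)
    (heq : ofPowerSeries ℤ K a * single (-(m : ℤ)) (1 : K)
        = ofPowerSeries ℤ K (psComp b s) * (ofPowerSeries ℤ K s)⁻¹ ^ m
            * lsDeriv (ofPowerSeries ℤ K s) + lsDeriv u * u⁻¹) :
    PowerSeries.constantCoeff a * PowerSeries.coeff 1 s ^ (m - 1)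
      = PowerSeries.constantCoeff b := by
  set S := ofPowerSeries ℤ K s
  set c := PowerSeries.coeff 1 s
  have hS : ((1 : ℤ) : WithTop ℤ) ≤ S.orderTop :=
    le_orderTop_ofPowerSeries (n := 1) fun i hi => by
      rw [Nat.lt_one_iff.mp hi, PowerSeries.coeff_zero_eq_constantCoeff_apply, hs0]
  have hS1 : S.coeff 1 = c := by simpa using PowerSeries.coeff_coe s 1
  have hS0 : S ≠ 0 := ne_zero_of_coeff_ne_zero (hS1 ▸ hs1)
  have hD : ((0 : ℤ) : WithTop ℤ) ≤ (lsDeriv S).orderTop := by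
    simpa using le_orderTop_lsDeriv hS
  have hu' : (u.order : WithTop ℤ) ≤ u.orderTop := (order_eq_orderTop_of_ne_zero hu).le
  have hA := zero_le_orderTop_ofPowerSeries a
  have hB := zero_le_orderTop_ofPowerSeries (psComp b s)
  have cleared : ofPowerSeries ℤ K a * single (-(m : ℤ)) (1 : K) * (S ^ m * u)
      = ofPowerSeries ℤ K (psComp b s) * lsDeriv S * u + lsDeriv u * S ^ m := by
    calc _ = ofPowerSeries ℤ K (psComp b s) * lsDeriv S * u * (S⁻¹ * S) ^ m
            + lsDeriv u * S ^ m * (u⁻¹ * u) := by rw [heq]; ring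
      _ = _ := by rw [inv_mul_cancel₀ hS0, inv_mul_cancel₀ hu, one_pow, mul_one, mul_one]
  have hcomp : PowerSeries.constantCoeff a * c ^ m * u.coeff u.order
      = PowerSeries.constantCoeff b * c * u.coeff u.order := by
    have hidx : (0 + -(m : ℤ)) + (m • 1 + u.order) = u.order := by simp
    have hderiv : (lsDeriv u * S ^ m).coeff u.order = 0 :=
      coeff_eq_zero_of_lt_orderTop <| lt_of_lt_of_le (WithTop.coe_lt_coe.mpr (by simp; omega))
        (le_orderTop_mul (le_orderTop_lsDeriv hu') (le_orderTop_pow hS m))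
    calc _ = (ofPowerSeries ℤ K a * single (-(m : ℤ)) (1 : K) * (S ^ m * u)).coeff
            ((0 + -(m : ℤ)) + (m • 1 + u.order)) := by
          rw [coeff_mul_of_le_orderTop (le_orderTop_mul hA (by simp))
              (le_orderTop_mul (le_orderTop_pow hS m) hu'),
            coeff_mul_of_le_orderTop hA (by simp), coeff_mul_of_le_orderTop (le_orderTop_pow hS m) hu',
            coeff_pow_of_le_orderTop hS, hS1, coeff_zero_ofPowerSeries]
          simp [mul_assoc]
      _ = (ofPowerSeries ℤ K (psComp b s) * lsDeriv S * u).coeff ((0 + 0) + u.order) := by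
          rw [hidx, cleared, coeff_add, hderiv, add_zero, zero_add, zero_add]
      _ = _ := by
          rw [coeff_mul_of_le_orderTop (le_orderTop_mul hB hD) hu', coeff_mul_of_le_orderTop hB hD,
            coeff_zero_ofPowerSeries, constantCoeff_psComp, coeff_lsDeriv]
          simp [hS1]
  have hu0 : u.coeff u.order ≠ 0 := fun h => hu (coeff_order_eq_zero.mp h)
  rw [← Nat.sub_add_cancel (show 1 ≤ m by omega), pow_succ, ← mul_assoc] at hcomp
  exact mul_right_cancel₀ hs1 (mul_right_cancel₀ hu0 hcomp)

end Connection

section DLog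

variable (k : Type*) {K : Type*} [CommRing k] [Field K] [Algebra k K]

noncomputable def dlog (x : K) : KaehlerDifferential k K := x⁻¹ • KaehlerDifferential.D k K x

variable {k}

theorem dlog_mul {x y : K} (hx : x ≠ 0) (hy : y ≠ 0) : dlog k (x * y) = dlog k x + dlog k y := by
  simp only [dlog, Derivation.leibniz, smul_add, smul_smul]
  rw [add_comm]
  congr 2 <;> field_simp

theorem dlog_pow (x : K) (n : ℕ) : dlog k (x ^ n) = n • dlog k x := by
  rcases eq_or_ne x 0 with rfl | hx
  · cases n <;> simp [dlog]
  induction n with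
  | zero => simp [dlog]
  | succ n ih => rw [pow_succ, dlog_mul (pow_ne_zero n hx) hx, ih, succ_nsmul]

end DLog

theorem dlog_mem_dlogSubgroup {k K : Type*} [Field k] [Field K] [Algebra k K] {x : K}
    (hx : x ≠ 0) : dlog k x ∈ dlogSubgroup k K :=
  AddSubgroup.subset_closure ⟨x, hx, rfl⟩

theorem two_torsion_connection_well_defined_general
    (k K : Type*) [Field k] [Field K] [Algebra k K]
    (m : ℕ) (hm : 2 ≤ m)
    (a b : PowerSeries K)
    (ha : PowerSeries.constantCoeff (R := K) a ≠ 0)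
    (s : PowerSeries K)
    (hs0 : PowerSeries.constantCoeff (R := K) s = 0) (hs1 : PowerSeries.coeff (R := K) 1 s ≠ 0)
    (u : LaurentSeries K) (hu : u ≠ 0)
    (heq : (HahnSeries.ofPowerSeries ℤ K a) * HahnSeries.single (-(m : ℤ)) (1 : K)
        = (HahnSeries.ofPowerSeries ℤ K (psComp b s))
            * ((HahnSeries.ofPowerSeries ℤ K s)⁻¹) ^ m
            * lsDeriv (HahnSeries.ofPowerSeries ℤ K s)
          + lsDeriv u * u⁻¹) :
    ∃ ω ∈ dlogSubgroup k K,
      (m : ℤ) • ((PowerSeries.constantCoeff (R := K) a)⁻¹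
            • KaehlerDifferential.D k K (PowerSeries.constantCoeff (R := K) a)
          - (PowerSeries.constantCoeff (R := K) b)⁻¹
            • KaehlerDifferential.D k K (PowerSeries.constantCoeff (R := K) b))
        = (2 : ℤ) • ω := by
  set c := PowerSeries.coeff 1 s
  have hlead := constantCoeff_mul_pow_eq_of_connection_eq hm hs0 hs1 hu heq
  obtain ⟨q, hq⟩ := Nat.even_mul_pred_self m
  refine ⟨-(q : ℤ) • dlog k c, AddSubgroup.zsmul_mem _ (dlog_mem_dlogSubgroup hs1) _, ?_⟩
  change (m : ℤ) • (dlog k _ - dlog k _) = _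
  rw [← hlead, dlog_mul ha (pow_ne_zero _ hs1), dlog_pow, sub_add_cancel_left, smul_neg,
    natCast_zsmul, smul_smul, hq]
  module

/-- Let `k ⊆ K` be fields of characteristic zero, `m ≥ 2`, and let `a, b ∈ K[[t]]`
have nonzero constant terms.  Let `s ∈ K[[t]]` be a change of local parameter
(`s(0) = 0`, `s'(0) ≠ 0`) and `u ∈ K((t))` a nonzero change of frame.  If the
rank-one connection forms `a·dt/t^m` and `b·dt'/t'^m` correspond under `t' = s(t)`
and the frame change by `u`, i.e.
`a·t^{−m} = (b∘s)·s^{−m}·s' + u'/u` in `K((t))`, then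
`m·(d log a(0) − d log b(0)) ∈ 2·DLog ⊆ Ω¹_{K/k}`; hence the 2-torsion connection
`(m/2)·d log a(0) ∈ Ω¹_{K/k}/DLog` attached to an irregular rank-one connection
is independent of the choice of local parameter and frame. -/
theorem two_torsion_connection_well_defined
    (k K : Type*) [Field k] [Field K] [Algebra k K] [CharZero k] [CharZero K]
    (m : ℕ) (hm : 2 ≤ m)
    (a b : PowerSeries K)
    (ha : PowerSeries.constantCoeff (R := K) a ≠ 0) (hb : PowerSeries.constantCoeff (R := K) b ≠ 0)
    (s : PowerSeries K)
    (hs0 : PowerSeries.constantCoeff (R := K) s = 0) (hs1 : PowerSeries.coeff (R := K) 1 s ≠ 0)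
    (u : LaurentSeries K) (hu : u ≠ 0)
    (heq : (HahnSeries.ofPowerSeries ℤ K a) * HahnSeries.single (-(m : ℤ)) (1 : K)
        = (HahnSeries.ofPowerSeries ℤ K (psComp b s))
            * ((HahnSeries.ofPowerSeries ℤ K s)⁻¹) ^ m
            * lsDeriv (HahnSeries.ofPowerSeries ℤ K s)
          + lsDeriv u * u⁻¹) :
    ∃ ω ∈ dlogSubgroup k K,
      (m : ℤ) • ((PowerSeries.constantCoeff (R := K) a)⁻¹
            • KaehlerDifferential.D k K (PowerSeries.constantCoeff (R := K) a)
          - (PowerSeries.constantCoeff (R := K) b)⁻¹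
            • KaehlerDifferential.D k K (PowerSeries.constantCoeff (R := K) b))
        = (2 : ℤ) • ω :=
  two_torsion_connection_well_defined_general k K m hm a b ha s hs0 hs1 u hu heq
end
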